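/- arXiv:2412.00014 — 5 statements merged into one kernel-verified Lean document; each statement's English description precedes it below -/
import Mathlib

section
/- Let u : ℝ → ℝⁿ satisfy u'(t) = F₁ u(t) for a fixed matrix F₁ ∈ ℝ^{n×n}. Then for every i ≥ 1, the Kronecker power y_i(t) = u(t)^{⊗i} satisfies the linear ODE y_i'(t) = A_i y_i(t), where A_i = Σ_{ν=1}^{i} I_n^{⊗(ν-1)} ⊗ F₁ ⊗ I_n^{⊗(i-ν)}. -/
/-- The `i`-th Kronecker power of a vector `u ∈ ℝⁿ`, represented as a function on
multi-indices: `(u^{⊗i}) k = ∏ ν, u (k ν)`. -/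
def kronPow {n : ℕ} (u : Fin n → ℝ) (i : ℕ) : (Fin i → Fin n) → ℝ :=
  fun k => ∏ ν, u (k ν)

/-- The `n^i × n^i` matrix `I_n^{⊗(ν-1)} ⊗ F ⊗ I_n^{⊗(i-ν)}`: the matrix `F` placed in the
`ν`-th tensor slot with identity matrices in all other slots. -/
def slotMat {n : ℕ} {i : ℕ} (F : Matrix (Fin n) (Fin n) ℝ) (ν : Fin i) :
    Matrix (Fin i → Fin n) (Fin i → Fin n) ℝ :=
  fun k l => F (k ν) (l ν) * ∏ μ ∈ Finset.univ.erase ν, (if k μ = l μ then (1 : ℝ) else 0)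

lemma slotMat_mulVec {n i : ℕ} (F : Matrix (Fin n) (Fin n) ℝ) (v : Fin n → ℝ) (ν : Fin i)
    (k : Fin i → Fin n) :
    (slotMat F ν).mulVec (kronPow v i) k
      = (∏ μ ∈ Finset.univ.erase ν, v (k μ)) * F.mulVec v (k ν) := by
  classical
  set f : Fin i → Fin n → ℝ :=
    Function.update (fun μ j => if k μ = j then v (k μ) else 0) ν (fun j => F (k ν) j * v j)
    with hf
  have hstep : ∀ l : Fin i → Fin n,
      slotMat F ν k l * kronPow v i l = ∏ μ, f μ (l μ) := by
    intro l
    rw [← Finset.mul_prod_erase (Finset.univ) (fun μ => f μ (l μ)) (Finset.mem_univ ν)]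
    have h1 : f ν (l ν) = F (k ν) (l ν) * v (l ν) := by simp [hf]
    have h2 : ∀ μ ∈ Finset.univ.erase ν, f μ (l μ) = if k μ = l μ then v (l μ) else 0 := by
      intro μ hμ
      have : μ ≠ ν := Finset.ne_of_mem_erase hμ
      simp only [hf, Function.update_of_ne this]
      split <;> simp_all
    rw [Finset.prod_congr rfl h2, h1]
    simp only [slotMat, kronPow]
    rw [← Finset.mul_prod_erase (Finset.univ) (fun μ => v (l μ)) (Finset.mem_univ ν),
      mul_mul_mul_comm, ← Finset.prod_mul_distrib]
    congr 1
    refine Finset.prod_congr rfl fun μ _ => ?_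
    split <;> simp
  calc (slotMat F ν).mulVec (kronPow v i) k
      = ∑ l : Fin i → Fin n, ∏ μ, f μ (l μ) := by
        simp only [Matrix.mulVec, dotProduct]
        exact Finset.sum_congr rfl fun l _ => hstep l
    _ = ∏ μ, ∑ j, f μ j := by
        rw [Finset.prod_univ_sum]
        rw [← Fintype.piFinset_univ]
    _ = (∏ μ ∈ Finset.univ.erase ν, v (k μ)) * F.mulVec v (k ν) := by
        rw [← Finset.mul_prod_erase (Finset.univ) (fun μ => ∑ j, f μ j) (Finset.mem_univ ν)]
        have h1 : (∑ j, f ν j) = F.mulVec v (k ν) := by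
          simp [hf, Matrix.mulVec, dotProduct]
        have h2 : ∀ μ ∈ Finset.univ.erase ν, (∑ j, f μ j) = v (k μ) := by
          intro μ hμ
          have : μ ≠ ν := Finset.ne_of_mem_erase hμ
          simp [hf, Function.update_of_ne this]
        rw [h1, Finset.prod_congr rfl h2, mul_comm]

/-- If `u' = F₁ u`, then for every `i ≥ 1` the Kronecker power `y_i(t) = u(t)^{⊗i}` satisfies
the linear ODE `y_i' = A_i y_i` with `A_i = Σ_{ν=1}^{i} I^{⊗(ν-1)} ⊗ F₁ ⊗ I^{⊗(i-ν)}`. -/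
theorem kronPow_linear_ode (n : ℕ) (F₁ : Matrix (Fin n) (Fin n) ℝ) (u : ℝ → Fin n → ℝ)
    (hu : ∀ t, HasDerivAt u (F₁.mulVec (u t)) t) (i : ℕ) (hi : 1 ≤ i) (t : ℝ) :
    HasDerivAt (fun s => kronPow (u s) i)
      ((∑ ν : Fin i, slotMat F₁ ν).mulVec (kronPow (u t) i)) t := by
  rw [hasDerivAt_pi]
  intro k
  have hcoord : ∀ ν : Fin i,
      HasDerivAt (fun s => u s (k ν)) (F₁.mulVec (u t) (k ν)) t := fun ν =>
    (hasDerivAt_pi.mp (hu t)) (k ν)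
  have h := HasDerivAt.finset_prod (u := Finset.univ)
    (f := fun ν s => u s (k ν)) (f' := fun ν => F₁.mulVec (u t) (k ν))
    (fun ν _ => hcoord ν)
  convert h using 1
  case e'_4 => rfl
  case e'_8 => funext s; simp [kronPow, Finset.prod_apply]
  have : (∑ ν : Fin i, slotMat F₁ ν).mulVec (kronPow (u t) i) k
        = ∑ ν : Fin i, (slotMat F₁ ν).mulVec (kronPow (u t) i) k := by
      simp [Matrix.mulVec, dotProduct, Matrix.sum_apply, Finset.sum_mul]
      rw [Finset.sum_comm]
  rw [this]
  exact Finset.sum_congr rfl fun ν _ => by rw [slotMat_mulVec]; simp [smul_eq_mul]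
end

section
/- Let u : ℝ → ℝⁿ be differentiable and satisfy u'(t) = F₀ + F₁ u(t) + F₂ (u(t) ⊗ u(t)) with F₀ ∈ ℝⁿ, F₁ ∈ ℝ^{n×n}, F₂ ∈ ℝ^{n×n²}. Then y₂(t) = u(t) ⊗ u(t) satisfies y₂'(t) = A₁² u(t) + A₂² y₂(t) + A₃² y₃(t), where y₃ = u^{⊗3}, A₁² = F₀ ⊗ I_n + I_n ⊗ F₀ (interpreted via Kronecker products with the column vector F₀), A₂² = F₁ ⊗ I_n + I_n ⊗ F₁, and A₃² = F₂ ⊗ I_n + I_n ⊗ F₂. -/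
open Matrix
open scoped Kronecker

/-- The Kronecker product of two vectors: `(u ⊗ v) (i, j) = u i * v j`. -/
def vecKron {n m : Type*} (u : n → ℝ) (v : m → ℝ) : n × m → ℝ :=
  fun p => u p.1 * v p.2

/-- A vector `u ∈ ℝⁿ` viewed as an `n × 1` column matrix. -/
def colMat {n : Type*} (u : n → ℝ) : Matrix n Unit ℝ := fun i _ => u i

/-- `A₁² = F₀ ⊗ I_n + I_n ⊗ F₀ ∈ ℝ^{n²×n}`, Kronecker products with the column vector `F₀`
(columns reindexed along the canonical identifications `Unit × Fin n ≃ Fin n ≃ Fin n × Unit`). -/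
def A12 {n : ℕ} (F₀ : Fin n → ℝ) : Matrix (Fin n × Fin n) (Fin n) ℝ :=
  ((colMat F₀) ⊗ₖ (1 : Matrix (Fin n) (Fin n) ℝ)).submatrix id (fun q => ((), q))
    + ((1 : Matrix (Fin n) (Fin n) ℝ) ⊗ₖ (colMat F₀)).submatrix id (fun q => (q, ()))

/-- `A₂² = F₁ ⊗ I_n + I_n ⊗ F₁ ∈ ℝ^{n²×n²}`. -/
def A22 {n : ℕ} (F₁ : Matrix (Fin n) (Fin n) ℝ) : Matrix (Fin n × Fin n) (Fin n × Fin n) ℝ :=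
  F₁ ⊗ₖ (1 : Matrix (Fin n) (Fin n) ℝ) + (1 : Matrix (Fin n) (Fin n) ℝ) ⊗ₖ F₁

/-- `A₃² = F₂ ⊗ I_n + I_n ⊗ F₂ ∈ ℝ^{n²×n³}` (columns of the first summand reindexed along the
canonical associativity identification `(n × n) × n ≃ n × (n × n)`). -/
def A32 {n : ℕ} (F₂ : Matrix (Fin n) (Fin n × Fin n) ℝ) :
    Matrix (Fin n × Fin n) (Fin n × Fin n × Fin n) ℝ :=
  (F₂ ⊗ₖ (1 : Matrix (Fin n) (Fin n) ℝ)).submatrix id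
      (fun q : Fin n × Fin n × Fin n => ((q.1, q.2.1), q.2.2))
    + (1 : Matrix (Fin n) (Fin n) ℝ) ⊗ₖ F₂

/-- If `u' = F₀ + F₁ u + F₂ (u ⊗ u)`, then `y₂ = u ⊗ u` satisfies
`y₂' = A₁² u + A₂² y₂ + A₃² y₃` where `y₃ = u^{⊗3}`. -/
theorem carleman_level_two (n : ℕ) (F₀ : Fin n → ℝ) (F₁ : Matrix (Fin n) (Fin n) ℝ)
    (F₂ : Matrix (Fin n) (Fin n × Fin n) ℝ) (u : ℝ → Fin n → ℝ)
    (hu : ∀ t, HasDerivAt u (F₀ + F₁.mulVec (u t) + F₂.mulVec (vecKron (u t) (u t))) t)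
    (t : ℝ) :
    HasDerivAt (fun s => vecKron (u s) (u s))
      ((A12 F₀).mulVec (u t) + (A22 F₁).mulVec (vecKron (u t) (u t))
        + (A32 F₂).mulVec (vecKron (u t) (vecKron (u t) (u t)))) t := by
  set d := F₀ + F₁.mulVec (u t) + F₂.mulVec (vecKron (u t) (u t)) with hd
  have hcomp : ∀ i : Fin n, HasDerivAt (fun s => u s i) (d i) t := by
    intro i
    exact (hasDerivAt_pi.mp (hu t)) i
  rw [hasDerivAt_pi]
  intro p
  obtain ⟨i, j⟩ := p
  have h := (hcomp i).mul (hcomp j)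
  convert h using 1
  show ((A12 F₀).mulVec (u t) + (A22 F₁).mulVec (vecKron (u t) (u t))
        + (A32 F₂).mulVec (vecKron (u t) (vecKron (u t) (u t)))) (i, j)
      = d i * u t j + u t i * d j
  have e1 : (A12 F₀).mulVec (u t) (i, j) = F₀ i * u t j + u t i * F₀ j := by
    simp only [A12, Matrix.mulVec, dotProduct, Matrix.add_apply, Matrix.submatrix_apply,
      id_eq, kroneckerMap_apply, colMat, Matrix.one_apply, add_mul, ite_mul, mul_ite,
      one_mul, mul_one, zero_mul, mul_zero, Finset.sum_add_distrib, Finset.sum_ite_eq,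
      Finset.mem_univ, if_true]
    ring
  have e2 : (A22 F₁).mulVec (vecKron (u t) (u t)) (i, j)
      = F₁.mulVec (u t) i * u t j + u t i * F₁.mulVec (u t) j := by
    simp [A22, Matrix.mulVec, dotProduct, vecKron, kroneckerMap_apply,
      Matrix.one_apply, Fintype.sum_prod_type, ite_mul, mul_ite,
      Finset.sum_add_distrib, mul_add, add_mul, mul_zero, zero_mul,
      Finset.sum_ite_eq, Finset.sum_ite_eq', Finset.mul_sum, Finset.sum_mul]
    try ring_nf
    try simp [mul_comm, mul_left_comm, mul_assoc]
  have e3 : (A32 F₂).mulVec (vecKron (u t) (vecKron (u t) (u t))) (i, j)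
      = F₂.mulVec (vecKron (u t) (u t)) i * u t j + u t i * F₂.mulVec (vecKron (u t) (u t)) j := by
    simp [A32, Matrix.mulVec, dotProduct, vecKron, kroneckerMap_apply,
      Matrix.one_apply, Fintype.sum_prod_type, ite_mul, mul_ite,
      Finset.sum_add_distrib, mul_add, add_mul, mul_zero, zero_mul,
      Finset.sum_ite_eq, Finset.sum_ite_eq', Finset.mul_sum, Finset.sum_mul]
    try ring_nf
    try simp [mul_comm, mul_left_comm, mul_assoc]
  simp only [Pi.add_apply, e1, e2, e3, hd]
  ring
  all_goals rfl
end

section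
/- For matrices F ∈ ℝ^{n×n^j} (j ∈ {0,1,2}) define A_{i+j-1}^i = Σ_{ν=1}^{i} I_n^{⊗(ν-1)} ⊗ F ⊗ I_n^{⊗(i-ν)}. If u : ℝ → ℝⁿ satisfies u' = F₀ + F₁ u + F₂ u^{⊗2}, then for every i ≥ 1, the derivative of y_i = u^{⊗i} equals Σ_{j=0}^{2} A_{i+j-1}^i(F_j) · u^{⊗(i+j-1)}, where u^{⊗0} := 1 ∈ ℝ. -/
/-- The `ν`-th summand of `A_{i-1}^i`: the column vector `F₀` in the `ν`-th of `i` tensor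
slots, identities elsewhere (the `ν`-th slot of the column multi-index is deleted). -/
def slotMat0 {n : ℕ} {i : ℕ} (F₀ : Fin n → ℝ) (ν : Fin (i + 1)) :
    Matrix (Fin (i + 1) → Fin n) (Fin i → Fin n) ℝ :=
  fun k l => F₀ (k ν) * (if k ∘ ν.succAbove = l then (1 : ℝ) else 0)

/-- The `ν`-th summand of `A_i^i`: `I^{⊗(ν-1)} ⊗ F₁ ⊗ I^{⊗(i-ν)}`. -/
def slotMat1 {n : ℕ} {i : ℕ} (F₁ : Matrix (Fin n) (Fin n) ℝ) (ν : Fin (i + 1)) :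
    Matrix (Fin (i + 1) → Fin n) (Fin (i + 1) → Fin n) ℝ :=
  fun k l => F₁ (k ν) (l ν) * (if k ∘ ν.succAbove = l ∘ ν.succAbove then (1 : ℝ) else 0)

/-- The `ν`-th summand of `A_{i+1}^i`: `I^{⊗(ν-1)} ⊗ F₂ ⊗ I^{⊗(i-ν)}`, where `F₂` consumes the
two adjacent column slots `ν, ν+1` of the `(i+1)`-fold multi-index, identities elsewhere. -/
def slotMat2 {n : ℕ} {i : ℕ} (F₂ : Matrix (Fin n) (Fin n × Fin n) ℝ) (ν : Fin (i + 1)) :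
    Matrix (Fin (i + 1) → Fin n) (Fin (i + 2) → Fin n) ℝ :=
  fun k l => F₂ (k ν) (l ν.castSucc, l ν.succ) *
    (if k ∘ ν.succAbove = (fun μ => l (ν.castSucc.succAbove (ν.succAbove μ))) then (1 : ℝ) else 0)

lemma prod_erase_succAbove {i : ℕ} (f : Fin (i + 1) → ℝ) (ν : Fin (i + 1)) :
    ∏ μ ∈ Finset.univ.erase ν, f μ = ∏ μ : Fin i, f (ν.succAbove μ) := by
  refine (Finset.prod_bij (fun μ _ => ν.succAbove μ) ?_ ?_ ?_ ?_).symm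
  · intro μ _; exact Finset.mem_erase.2 ⟨Fin.succAbove_ne ν μ, Finset.mem_univ _⟩
  · intro a _ b _ h; exact Fin.succAbove_right_injective h
  · intro b hb
    obtain ⟨z, hz⟩ := Fin.exists_succAbove_eq (Finset.mem_erase.1 hb).1
    exact ⟨z, Finset.mem_univ _, hz⟩
  · intro a _; rfl

lemma mulVec0 {n i : ℕ} (F₀ : Fin n → ℝ) (v : Fin n → ℝ) (ν : Fin (i + 1))
    (k : Fin (i + 1) → Fin n) :
    (slotMat0 F₀ ν).mulVec (kronPow v i) k
      = F₀ (k ν) * ∏ μ : Fin i, v (k (ν.succAbove μ)) := by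
  unfold slotMat0 kronPow Matrix.mulVec dotProduct
  simp only [mul_ite, mul_one, mul_zero, ite_mul, zero_mul]
  rw [Finset.sum_ite_eq Finset.univ (k ∘ ν.succAbove)
    (fun l => F₀ (k ν) * ∏ μ, v (l μ))]
  simp [Function.comp]

lemma mulVec1 {n i : ℕ} (F₁ : Matrix (Fin n) (Fin n) ℝ) (v : Fin n → ℝ) (ν : Fin (i + 1))
    (k : Fin (i + 1) → Fin n) :
    (slotMat1 F₁ ν).mulVec (kronPow v (i + 1)) k
      = F₁.mulVec v (k ν) * ∏ μ : Fin i, v (k (ν.succAbove μ)) := by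
  unfold slotMat1 kronPow Matrix.mulVec dotProduct
  rw [← Equiv.sum_comp (Fin.insertNthEquiv (fun _ => Fin n) ν)]
  simp only [Fin.insertNthEquiv_apply]
  rw [Fintype.sum_prod_type]
  have hprod : ∀ (a : Fin n) (m : Fin i → Fin n),
      (∏ μ : Fin (i+1), v ((Fin.insertNth ν a m : Fin (i+1) → Fin n) μ)) = v a * ∏ μ : Fin i, v (m μ) := by
    intro a m
    rw [Fin.prod_univ_succAbove (fun μ => v ((Fin.insertNth ν a m : Fin (i+1) → Fin n) μ)) ν]
    simp [Fin.insertNth_apply_same, Fin.insertNth_apply_succAbove]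
  have hcomp : ∀ (a : Fin n) (m : Fin i → Fin n),
      (Fin.insertNth ν a m : Fin (i+1) → Fin n) ∘ ν.succAbove = m := by
    intro a m; funext μ; simp [Function.comp, Fin.insertNth_apply_succAbove]
  simp only [Fin.insertNthEquiv, Equiv.coe_fn_mk, Fin.insertNth_apply_same, hcomp, hprod, mul_ite, mul_one, mul_zero, ite_mul, zero_mul]
  rw [Finset.sum_congr rfl (fun a _ => Finset.sum_ite_eq Finset.univ (k ∘ ν.succAbove)
    (fun m => F₁ (k ν) a * (v a * ∏ μ, v (m μ))))]
  simp [Function.comp, Finset.sum_mul, mul_assoc, Matrix.mulVec, dotProduct]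

lemma mulVec2 {n i : ℕ} (F₂ : Matrix (Fin n) (Fin n × Fin n) ℝ) (v : Fin n → ℝ) (ν : Fin (i + 1))
    (k : Fin (i + 1) → Fin n) :
    (slotMat2 F₂ ν).mulVec (kronPow v (i + 2)) k
      = F₂.mulVec (vecKron v v) (k ν) * ∏ μ : Fin i, v (k (ν.succAbove μ)) := by
  unfold slotMat2 kronPow Matrix.mulVec dotProduct vecKron
  rw [← Equiv.sum_comp (Fin.insertNthEquiv (fun _ => Fin (n : ℕ)) ν.castSucc)]
  rw [Fintype.sum_prod_type]
  rw [Finset.sum_congr rfl (fun a _ =>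
    (Equiv.sum_comp (Fin.insertNthEquiv (fun _ => Fin (n : ℕ)) ν) _).symm)]
  rw [Finset.sum_congr rfl (fun a _ => Fintype.sum_prod_type _)]
  have h2 : ∀ (a : Fin n) (g : Fin (i+1) → Fin n),
      (Fin.insertNth ν.castSucc a g : Fin (i+2) → Fin n) ν.succ = g ν := by
    intro a g
    rw [← Fin.succAbove_castSucc_self ν, Fin.insertNth_apply_succAbove]
  have h3 : ∀ (a : Fin n) (g : Fin (i+1) → Fin n) (q : Fin (i+1)),
      (Fin.insertNth ν.castSucc a g : Fin (i+2) → Fin n) (ν.castSucc.succAbove q) = g q := by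
    intro a g q; rw [Fin.insertNth_apply_succAbove]
  have hp1 : ∀ (a : Fin n) (g : Fin (i+1) → Fin n),
      (∏ p : Fin (i+2), v ((Fin.insertNth ν.castSucc a g : Fin (i+2) → Fin n) p))
        = v a * ∏ q : Fin (i+1), v (g q) := by
    intro a g
    rw [Fin.prod_univ_succAbove (fun p => v ((Fin.insertNth ν.castSucc a g : Fin (i+2) → Fin n) p))
      ν.castSucc]
    simp [h3]
  have hprod : ∀ (b : Fin n) (m : Fin i → Fin n),
      (∏ μ : Fin (i+1), v ((Fin.insertNth ν b m : Fin (i+1) → Fin n) μ)) = v b * ∏ μ : Fin i, v (m μ) := by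
    intro b m
    rw [Fin.prod_univ_succAbove (fun μ => v ((Fin.insertNth ν b m : Fin (i+1) → Fin n) μ)) ν]
    simp [Fin.insertNth_apply_succAbove]
  have hcomp : ∀ (b : Fin n) (m : Fin i → Fin n),
      (Fin.insertNth ν b m : Fin (i+1) → Fin n) ∘ ν.succAbove = m := by
    intro b m; funext μ; simp [Function.comp, Fin.insertNth_apply_succAbove]
  have hcomp' : ∀ (b : Fin n) (m : Fin i → Fin n),
      (fun μ => (Fin.insertNth ν b m : Fin (i+1) → Fin n) (ν.succAbove μ)) = m := by
    intro b m; funext μ; simp [Fin.insertNth_apply_succAbove]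
  simp only [Fin.insertNthEquiv, Equiv.coe_fn_mk, Fin.insertNth_apply_same, h2, h3, hp1, hprod,
    hcomp, hcomp', mul_ite, mul_one, mul_zero, ite_mul, zero_mul]
  rw [Finset.sum_congr rfl (fun a _ => Finset.sum_congr rfl (fun b _ =>
    Finset.sum_ite_eq Finset.univ (k ∘ ν.succAbove)
      (fun m => F₂ (k ν) (a, b) * (v a * (v b * ∏ μ, v (m μ))))))]
  rw [Fintype.sum_prod_type]
  simp only [Finset.mem_univ, if_true, Function.comp, Finset.sum_mul]
  congr 1; funext a; congr 1; funext b; ring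

lemma sum_mulVec_apply {α β : Type*} [Fintype α] [Fintype β] {γ : Type*} [Fintype γ]
    (M : γ → Matrix α β ℝ) (w : β → ℝ) (k : α) :
    (∑ ν, M ν).mulVec w k = ∑ ν, (M ν).mulVec w k := by
  simp [Matrix.mulVec, dotProduct, Matrix.sum_apply, Finset.sum_apply, Finset.sum_mul]
  rw [Finset.sum_comm]

/-- Carleman linearization identity: if `u' = F₀ + F₁ u + F₂ u^{⊗2}` then for every `i ≥ 1`
(written `i + 1` with `i : ℕ`), the derivative of `y_i = u^{⊗i}` equals
`Σ_{j=0}^{2} A_{i+j-1}^i(F_j) u^{⊗(i+j-1)}`. -/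
theorem carleman_tridiagonal (n : ℕ) (F₀ : Fin n → ℝ) (F₁ : Matrix (Fin n) (Fin n) ℝ)
    (F₂ : Matrix (Fin n) (Fin n × Fin n) ℝ) (u : ℝ → Fin n → ℝ)
    (hu : ∀ t, HasDerivAt u (F₀ + F₁.mulVec (u t) + F₂.mulVec (vecKron (u t) (u t))) t)
    (i : ℕ) (t : ℝ) :
    HasDerivAt (fun s => kronPow (u s) (i + 1))
      ((∑ ν : Fin (i + 1), slotMat0 F₀ ν).mulVec (kronPow (u t) i)
        + (∑ ν : Fin (i + 1), slotMat1 F₁ ν).mulVec (kronPow (u t) (i + 1))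
        + (∑ ν : Fin (i + 1), slotMat2 F₂ ν).mulVec (kronPow (u t) (i + 2))) t := by
  rw [hasDerivAt_pi]
  intro k
  set D : Fin n → ℝ := F₀ + F₁.mulVec (u t) + F₂.mulVec (vecKron (u t) (u t)) with hD
  have h := HasDerivAt.finset_prod (u := Finset.univ)
    (f := fun ν s => u s (k ν)) (f' := fun ν => D (k ν)) (x := t)
    (fun ν _ => hasDerivAt_pi.1 (hu t) (k ν))
  have hval : (∑ ν ∈ Finset.univ, (∏ μ ∈ Finset.univ.erase ν, u t (k μ)) • D (k ν))
      = ((∑ ν : Fin (i + 1), slotMat0 F₀ ν).mulVec (kronPow (u t) i)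
        + (∑ ν : Fin (i + 1), slotMat1 F₁ ν).mulVec (kronPow (u t) (i + 1))
        + (∑ ν : Fin (i + 1), slotMat2 F₂ ν).mulVec (kronPow (u t) (i + 2))) k := by
    simp only [Pi.add_apply, sum_mulVec_apply, mulVec0, mulVec1, mulVec2, hD,
      smul_eq_mul, prod_erase_succAbove]
    rw [← Finset.sum_add_distrib, ← Finset.sum_add_distrib]
    refine Finset.sum_congr rfl fun ν _ => ?_
    ring
  rw [← hval]
  refine HasDerivAt.congr_of_eventuallyEq h (Filter.Eventually.of_forall fun s => ?_)
  simp [kronPow, Finset.prod_apply]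
end

section
/- Let u be smooth and solve ∂u/∂t = μ ∂²u/∂x² − u ∂u/∂x. Define y₂(x₁, x₂, t) = u(x₁,t)·u(x₂,t). Then y₂ satisfies ∂y₂/∂t = μ(∂²/∂x₁² + ∂²/∂x₂²) y₂ − [∂/∂x₁ y₃(x₁, w, x₂)]|_{w = x₁} − [∂/∂x₂ y₃(x₁, x₂, w)]|_{w = x₂}, where y₃(x₁,x₂,x₃,t) = u(x₁,t)u(x₂,t)u(x₃,t). -/
/-- For a smooth solution `u` of the viscous Burgers equation
`∂u/∂t = μ ∂²u/∂x² − u ∂u/∂x`, the continuous Kronecker square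
`y₂(x₁, x₂, t) = u(x₁,t) u(x₂,t)` satisfies the level-2 Carleman equation
`∂y₂/∂t = μ(∂²_{x₁} + ∂²_{x₂}) y₂ − [∂_{x₁} y₃(x₁,w,x₂)]|_{w=x₁} − [∂_{x₂} y₃(x₁,x₂,w)]|_{w=x₂}`,
where `y₃(x₁,x₂,x₃,t) = u(x₁,t)u(x₂,t)u(x₃,t)`. -/
theorem burgers_carleman_level_two (μ : ℝ) (hμ : 0 ≤ μ) (u : ℝ → ℝ → ℝ)
    (hu : ContDiff ℝ (⊤ : ℕ∞) (fun p : ℝ × ℝ => u p.1 p.2))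
    (hpde : ∀ x t, deriv (fun s => u x s) t =
      μ * deriv (fun y => deriv (fun y' => u y' t) y) x - u x t * deriv (fun y => u y t) x)
    (y₂ : ℝ → ℝ → ℝ → ℝ) (hy₂ : ∀ x₁ x₂ t, y₂ x₁ x₂ t = u x₁ t * u x₂ t)
    (y₃ : ℝ → ℝ → ℝ → ℝ → ℝ) (hy₃ : ∀ x₁ x₂ x₃ t, y₃ x₁ x₂ x₃ t = u x₁ t * u x₂ t * u x₃ t)
    (x₁ x₂ t : ℝ) :
    deriv (fun s => y₂ x₁ x₂ s) t =
      μ * (deriv (fun y => deriv (fun y' => y₂ y' x₂ t) y) x₁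
            + deriv (fun y => deriv (fun y' => y₂ x₁ y' t) y) x₂)
        - deriv (fun y => y₃ y x₁ x₂ t) x₁
        - deriv (fun y => y₃ x₁ y x₂ t) x₂ := by
  have h1 : ∀ t, ContDiff ℝ (⊤ : ℕ∞) (fun x => u x t) := fun t =>
    hu.comp (contDiff_id.prodMk contDiff_const)
  have h2 : ∀ x, ContDiff ℝ (⊤ : ℕ∞) (fun s => u x s) := fun x =>
    hu.comp (contDiff_const.prodMk contDiff_id)
  have hdx : ∀ t x, DifferentiableAt ℝ (fun y => u y t) x := fun t x =>
    ((h1 t).differentiable (by simp)) x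
  have hdt : ∀ x s, DifferentiableAt ℝ (fun s' => u x s') s := fun x s =>
    ((h2 x).differentiable (by simp)) s
  have hdd : ∀ t x, DifferentiableAt ℝ (deriv (fun y => u y t)) x := fun t x =>
    (((contDiff_infty_iff_deriv.mp ((h1 t).of_le (by simp))).2).differentiable (by simp)) x
  simp only [hy₂, hy₃]
  rw [deriv_fun_mul (hdt x₁ t) (hdt x₂ t)]
  have key1 : deriv (fun y => deriv (fun y' => u y' t * u x₂ t) y) x₁
      = deriv (deriv (fun y => u y t)) x₁ * u x₂ t := by
    have e : (fun y => deriv (fun y' => u y' t * u x₂ t) y)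
        = fun y => deriv (fun y' => u y' t) y * u x₂ t := by
      funext y; rw [deriv_mul_const (hdx t y)]
    rw [e, deriv_mul_const (hdd t x₁)]
  have key2 : deriv (fun y => deriv (fun y' => u x₁ t * u y' t) y) x₂
      = u x₁ t * deriv (deriv (fun y => u y t)) x₂ := by
    have e : (fun y => deriv (fun y' => u x₁ t * u y' t) y)
        = fun y => u x₁ t * deriv (fun y' => u y' t) y := by
      funext y; rw [deriv_const_mul_field]
    rw [e, deriv_const_mul_field]
  have key3 : deriv (fun y => u y t * u x₁ t * u x₂ t) x₁
      = deriv (fun y => u y t) x₁ * (u x₁ t * u x₂ t) := by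
    simp only [mul_assoc]; rw [deriv_mul_const (hdx t x₁)]
  have key4 : deriv (fun y => u x₁ t * u y t * u x₂ t) x₂
      = u x₁ t * (deriv (fun y => u y t) x₂ * u x₂ t) := by
    simp only [mul_assoc]; rw [deriv_const_mul_field, deriv_mul_const (hdx t x₂)]
  rw [key1, key2, key3, key4, hpde x₁ t, hpde x₂ t]
  ring
end

section
/- If u : ℝ → ℝⁿ solves u' = F₁ u with u(0) = u₀, then u(t)^{⊗i} = exp(t A_i) u₀^{⊗i}, where A_i = Σ_{ν=1}^{i} I^{⊗(ν-1)} ⊗ F₁ ⊗ I^{⊗(i-ν)}, and moreover exp(t A_i) = (exp(t F₁))^{⊗i}. -/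
open NormedSpace

/-- The `i`-th Kronecker power of a matrix: `(M^{⊗i}) k l = ∏ ν, M (k ν) (l ν)`. -/
def kronMatPow {n : ℕ} (M : Matrix (Fin n) (Fin n) ℝ) (i : ℕ) :
    Matrix (Fin i → Fin n) (Fin i → Fin n) ℝ :=
  fun k l => ∏ ν, M (k ν) (l ν)

/-!
By the Leibniz rule, a Kronecker product `v₁(t) ⊗ ⋯ ⊗ vᵢ(t)` of solutions of `v' = F₁ v` solves
`w' = Aᵢ w`, since the summand `I ⊗ ⋯ ⊗ F₁ ⊗ ⋯ ⊗ I` of `Aᵢ` differentiates exactly one factor.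
Uniqueness for linear ODEs then gives `v₁(t) ⊗ ⋯ ⊗ vᵢ(t) = exp(t Aᵢ) (v₁(0) ⊗ ⋯ ⊗ vᵢ(0))`.
Taking every `v_ν = u` gives the first claim; taking `v_ν(t) = exp(t F₁) e_{l_ν}` identifies the
column `l` of `exp(t Aᵢ)` with the column `l` of `exp(t F₁)^{⊗i}`.
-/

open Finset Matrix

namespace Matrix

variable {m : Type*} [Fintype m] [DecidableEq m]

-- `exp` does not depend on the norm, so any normed-algebra structure on matrices will do.
open scoped Norms.Operator in
theorem hasDerivAt_exp_smul_mulVec (A : Matrix m m ℝ) (c : m → ℝ) (t : ℝ) :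
    HasDerivAt (fun s : ℝ => exp (s • A) *ᵥ c) (A *ᵥ (exp (t • A) *ᵥ c)) t := by
  let applyTo : Matrix m m ℝ →L[ℝ] (m → ℝ) :=
    LinearMap.toContinuousLinearMap ((mulVecBilin ℝ ℝ).flip c)
  rw [mulVec_mulVec]
  exact applyTo.hasFDerivAt.comp_hasDerivAt t (hasDerivAt_exp_smul_const' A t)

theorem eq_exp_smul_mulVec_of_hasDerivAt {A : Matrix m m ℝ} {f : ℝ → m → ℝ}
    (hf : ∀ s, HasDerivAt f (A *ᵥ f s) s) (t : ℝ) : f t = exp (t • A) *ᵥ f 0 := by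
  have hlip : LipschitzWith ‖(mulVecLin A).toContinuousLinearMap‖₊ (A *ᵥ ·) :=
    (mulVecLin A).toContinuousLinearMap.lipschitz
  refine congrFun (ODE_solution_unique_univ (v := fun _ => (A *ᵥ ·)) (s := fun _ => Set.univ)
    (t₀ := 0) (fun _ => hlip.lipschitzOnWith) (fun s => ⟨hf s, trivial⟩)
    (fun s => ⟨hasDerivAt_exp_smul_mulVec A (f 0) s, trivial⟩) ?_) t
  simp

end Matrix

def kronProd {ι m : Type*} [Fintype ι] (w : ι → m → ℝ) : (ι → m) → ℝ :=
  fun k => ∏ ν, w ν (k ν)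

theorem kronProd_single {ι m : Type*} [Fintype ι] [DecidableEq ι] [DecidableEq m] (l : ι → m) :
    kronProd (fun ν => Pi.single (l ν) (1 : ℝ)) = Pi.single l 1 := by
  ext k
  simp [kronProd, Pi.single_apply, prod_boole, funext_iff]

section Slot

variable {n i : ℕ} (F : Matrix (Fin n) (Fin n) ℝ)

theorem slotMat_apply_eq_prod (ν : Fin i) (k l : Fin i → Fin n) :
    slotMat F ν k l = ∏ μ, if μ = ν then F (k ν) (l μ) else if k μ = l μ then 1 else 0 := by
  rw [← mul_prod_erase _ _ (mem_univ ν), if_pos rfl]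
  refine congrArg _ (prod_congr rfl fun μ hμ => ?_)
  rw [if_neg (ne_of_mem_erase hμ)]

theorem slotMat_mulVec_kronProd (ν : Fin i) (w : Fin i → Fin n → ℝ) :
    slotMat F ν *ᵥ kronProd w = fun k => (F *ᵥ w ν) (k ν) * ∏ μ ∈ univ.erase ν, w μ (k μ) := by
  ext k
  calc (slotMat F ν *ᵥ kronProd w) k
      = ∑ l : Fin i → Fin n, ∏ μ,
          (if μ = ν then F (k ν) (l μ) else if k μ = l μ then 1 else 0) * w μ (l μ) := by
        simp only [mulVec, dotProduct, slotMat_apply_eq_prod, kronProd, prod_mul_distrib]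
    _ = ∏ μ, ∑ j, (if μ = ν then F (k ν) j else if k μ = j then 1 else 0) * w μ j := by
        rw [Fintype.prod_sum]
    _ = (F *ᵥ w ν) (k ν) * ∏ μ ∈ univ.erase ν, w μ (k μ) := by
        rw [← mul_prod_erase _ _ (mem_univ ν)]
        congr 1
        · simp [mulVec, dotProduct]
        · exact prod_congr rfl fun μ hμ => by simp [if_neg (ne_of_mem_erase hμ)]

theorem hasDerivAt_kronProd {v : Fin i → ℝ → Fin n → ℝ}
    (hv : ∀ ν s, HasDerivAt (v ν) (F *ᵥ v ν s) s) (t : ℝ) :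
    HasDerivAt (fun s => kronProd (v · s)) ((∑ ν, slotMat F ν) *ᵥ kronProd (v · t)) t := by
  rw [hasDerivAt_pi]
  intro k
  simp only [sum_mulVec, Finset.sum_apply, slotMat_mulVec_kronProd]
  refine (HasDerivAt.fun_finsetProd fun ν _ => hasDerivAt_pi.mp (hv ν t) (k ν)).congr_deriv ?_
  simp only [smul_eq_mul, mul_comm]

theorem kronProd_eq_exp_mulVec_kronProd {v : Fin i → ℝ → Fin n → ℝ}
    (hv : ∀ ν s, HasDerivAt (v ν) (F *ᵥ v ν s) s) (t : ℝ) :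
    kronProd (v · t) = exp (t • ∑ ν, slotMat F ν) *ᵥ kronProd (v · 0) :=
  eq_exp_smul_mulVec_of_hasDerivAt (hasDerivAt_kronProd F hv) t

end Slot

theorem kronPow_exp_solution_general (n : ℕ) (F₁ : Matrix (Fin n) (Fin n) ℝ)
    (u : ℝ → Fin n → ℝ) (u₀ : Fin n → ℝ)
    (hu : ∀ t, HasDerivAt u (F₁.mulVec (u t)) t) (h0 : u 0 = u₀) (i : ℕ)
    (t : ℝ) :
    kronPow (u t) i = (exp (t • ∑ ν : Fin i, slotMat F₁ ν)).mulVec (kronPow u₀ i) ∧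
    exp (t • ∑ ν : Fin i, slotMat F₁ ν) = kronMatPow (exp (t • F₁)) i := by
  -- `kronPow u i` is `kronProd (fun _ => u)` by definition.
  refine ⟨h0 ▸ kronProd_eq_exp_mulVec_kronProd F₁ (fun _ => hu) t, ?_⟩
  refine ext_of_mulVec_single fun l => ?_
  have hcol := kronProd_eq_exp_mulVec_kronProd F₁
    (v := fun ν s => exp (s • F₁) *ᵥ Pi.single (l ν) 1)
    (fun ν => hasDerivAt_exp_smul_mulVec F₁ _) t
  rw [zero_smul, exp_zero] at hcol
  simp only [one_mulVec, kronProd_single] at hcol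
  rw [← hcol]
  ext k
  simp [kronProd, kronMatPow]

/-- If `u' = F₁ u` with `u(0) = u₀`, then `u(t)^{⊗i} = exp(t A_i) u₀^{⊗i}` with
`A_i = Σ_{ν=1}^i I^{⊗(ν-1)} ⊗ F₁ ⊗ I^{⊗(i-ν)}`, and moreover
`exp(t A_i) = (exp(t F₁))^{⊗i}`. -/
theorem kronPow_exp_solution (n : ℕ) (F₁ : Matrix (Fin n) (Fin n) ℝ)
    (u : ℝ → Fin n → ℝ) (u₀ : Fin n → ℝ)
    (hu : ∀ t, HasDerivAt u (F₁.mulVec (u t)) t) (h0 : u 0 = u₀) (i : ℕ) (hi : 1 ≤ i)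
    (t : ℝ) :
    kronPow (u t) i = (exp (t • ∑ ν : Fin i, slotMat F₁ ν)).mulVec (kronPow u₀ i) ∧
    exp (t • ∑ ν : Fin i, slotMat F₁ ν) = kronMatPow (exp (t • F₁)) i :=
  kronPow_exp_solution_general n F₁ u u₀ hu h0 i t
end
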